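/- arXiv:1210.1992 — 4 statements merged into one kernel-verified Lean document; each statement's English description precedes it below -/
import Mathlib

section
/- Let X be a metrizable space with a regular Borel measure λ. Then for any measurable set C ⊆ X with λ(C) < ∞ and any ε > 0, there exists a Borel set A with λ(∂A) = 0 and λ(A Δ C) < ε. Moreover, if C is open then A can be chosen to be a closed subset of C. -/
/-!
Inside an open set `U` of finite measure, take a compact `K ⊆ U` carrying almost all of the mass
of `U` and a thickening radius `δ` with `cthickening δ K ⊆ U`. The frontiers of the thickenings
`thickening r K`, `0 < r < δ`, are pairwise disjoint, so all but countably many of them are null;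
the closure of such a thickening is the required closed set. A general set of finite measure is
first replaced by an open superset of almost the same measure.
-/

open MeasureTheory Set ENNReal

section

variable {X : Type*} [TopologicalSpace X] [TopologicalSpace.MetrizableSpace X]
  [MeasurableSpace X] [OpensMeasurableSpace X] (μ : Measure X)

theorem IsOpen.exists_isClosed_subset_null_frontier_sdiff_lt [μ.InnerRegularCompactLTTop]
    {U : Set X} (hU : IsOpen U) (hμU : μ U ≠ ∞) {ε : ℝ≥0∞} (hε : ε ≠ 0) :
    ∃ A, IsClosed A ∧ A ⊆ U ∧ μ (frontier A) = 0 ∧ μ (U \ A) < ε := by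
  let := TopologicalSpace.metrizableSpaceMetric X
  obtain ⟨K, hKU, hK, hUK⟩ := hU.measurableSet.exists_isCompact_sdiff_lt hμU hε
  obtain ⟨δ, hδ, hδU⟩ := hK.exists_cthickening_subset_open hU hKU
  have : Fact (μ U < ∞) := ⟨hμU.lt_top⟩
  obtain ⟨r, ⟨hr, hrδ⟩, hr_null⟩ :=
    exists_null_frontier_thickening (μ.restrict U) K hδ
  have hAU : closure (Metric.thickening r K) ⊆ U :=
    (Metric.closure_thickening_subset_cthickening r K).trans
      ((Metric.cthickening_mono hrδ.le K).trans hδU)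
  refine ⟨closure (Metric.thickening r K), isClosed_closure, hAU, ?_, ?_⟩
  · refine measure_mono_null frontier_closure_subset ?_
    rwa [Measure.restrict_eq_self μ
      (frontier_subset_closure.trans hAU)] at hr_null
  · calc μ (U \ closure (Metric.thickening r K)) ≤ μ (U \ K) :=
          measure_mono (sdiff_subset_sdiff_right
            ((Metric.self_subset_thickening hr K).trans subset_closure))
      _ < ε := hUK

theorem MeasurableSet.exists_isClosed_null_frontier_symmDiff_lt [μ.OuterRegular]
    [μ.InnerRegularCompactLTTop] {C : Set X} (hC : MeasurableSet C) (hμC : μ C ≠ ∞)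
    {ε : ℝ≥0∞} (hε : ε ≠ 0) :
    ∃ A, IsClosed A ∧ μ (frontier A) = 0 ∧ μ (symmDiff A C) < ε := by
  have hε₂ : ε / 2 ≠ 0 := (ENNReal.half_pos hε).ne'
  obtain ⟨U, hCU, hU, hμU, hUC⟩ := hC.exists_isOpen_sdiff_lt hμC hε₂
  obtain ⟨A, hA, hAU, hA_null, hUA⟩ :=
    hU.exists_isClosed_subset_null_frontier_sdiff_lt μ hμU.ne hε₂
  refine ⟨A, hA, hA_null, ?_⟩
  calc μ (symmDiff A C) ≤ μ (A \ C) + μ (C \ A) := measure_union_le _ _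
    _ ≤ μ (U \ C) + μ (U \ A) := by gcongr
    _ < ε / 2 + ε / 2 := ENNReal.add_lt_add hUC hUA
    _ = ε := ENNReal.add_halves ε

end

theorem stmt4 {X : Type*} [TopologicalSpace X] [TopologicalSpace.MetrizableSpace X]
    [MeasurableSpace X] [BorelSpace X] (μ : Measure X) [μ.Regular]
    (C : Set X) (hC : MeasurableSet C) (hCfin : μ C ≠ ⊤)
    (ε : ℝ≥0∞) (hε : 0 < ε) :
    (∃ A : Set X, MeasurableSet A ∧ μ (closure A ∩ closure Aᶜ) = 0 ∧
      μ (symmDiff A C) < ε) ∧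
    (IsOpen C → ∃ A : Set X, IsClosed A ∧ A ⊆ C ∧
      μ (closure A ∩ closure Aᶜ) = 0 ∧ μ (symmDiff A C) < ε) := by
  simp only [← frontier_eq_closure_inter_closure]
  constructor
  · obtain ⟨A, hA, hA_null, hAC⟩ :=
      hC.exists_isClosed_null_frontier_symmDiff_lt μ hCfin hε.ne'
    exact ⟨A, hA.measurableSet, hA_null, hAC⟩
  · intro hCo
    obtain ⟨A, hA, hAC, hA_null, hCA⟩ :=
      hCo.exists_isClosed_subset_null_frontier_sdiff_lt μ hCfin hε.ne'
    exact ⟨A, hA, hAC, hA_null, by rwa [symmDiff_of_le hAC]⟩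
end

section
/- Let μ be a probability measure on a measurable space X and let P = {P₁, …, Pₙ} be a finite measurable partition of X. Let ε > 0 and choose δ > 0 with 3n³δ < ε. Suppose S is a sub-algebra of measurable sets and ψ : P → S is a map with μ(Pᵢ Δ ψ(Pᵢ)) < δ for all i. Define φ(Pᵢ) = ψ(Pᵢ) \ ⋃_{j<i} ψ(Pⱼ) for i < n and φ(Pₙ) = X \ ⋃_{i<n} ψ(Pᵢ). Then {φ(P₁), …, φ(Pₙ)} is a partition of X into sets in S, and extending φ additively to the algebra generated by P, we have μ(φ(Q) Δ Q) < ε for every Q in the algebra generated by P. -/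
/-!
Replacing `ψ (last n)` by `univ` turns `φ` into the `disjointed` sequence of `ψ`, so `φ` is a
partition into sets of the algebra `S`. Since `P` is a partition and `φ` covers, a point where
`⋃ i ∈ I, φ i` and `⋃ i ∈ I, P i` differ lies in some `φ k \ P k`, and such a point already lies in
some `P j ∆ ψ j`: for `k` not last because `φ k ⊆ ψ k`, and for `k` last because `φ k` avoids every
`ψ j` with `j` not last. Hence the error is at most `(n + 1) δ`, far below `3 (n + 1)³ δ`.
-/

open MeasureTheory Set Function

theorem MeasureTheory.IsSetAlgebra.disjointed_mem {α ι : Type*} [Preorder ι]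
    [LocallyFiniteOrderBot ι] {S : Set (Set α)} (hS : IsSetAlgebra S) {f : ι → Set α}
    (hf : ∀ i, f i ∈ S) (i : ι) : disjointed f i ∈ S :=
  disjointedRec (fun _ j ht => hS.sdiff_mem ht (hf j)) (hf i)

theorem disjointed_subset_compl_of_lt {α ι : Type*} [Preorder ι] [LocallyFiniteOrderBot ι]
    (f : ι → Set α) {i j : ι} (hji : j < i) : disjointed f i ⊆ (f j)ᶜ := by
  rw [disjointed_eq_inter_compl]
  exact inter_subset_right.trans (biInter_subset_of_mem hji)

theorem Set.symmDiff_biUnion_subset_iUnion_diff {α ι : Type*} {P φ : ι → Set α}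
    (hP : Pairwise (Disjoint on P)) (hφ : ⋃ i, φ i = univ) (I : Set ι) :
    symmDiff (⋃ i ∈ I, φ i) (⋃ i ∈ I, P i) ⊆ ⋃ k, φ k \ P k := by
  intro x hx
  rcases hx with ⟨hxφ, hxP⟩ | ⟨hxP, hxφ⟩
  · obtain ⟨i, hi, hxi⟩ := mem_iUnion₂.mp hxφ
    exact mem_iUnion.mpr ⟨i, hxi, fun h => hxP (mem_biUnion hi h)⟩
  · obtain ⟨i, hi, hxi⟩ := mem_iUnion₂.mp hxP
    obtain ⟨k, hxk⟩ := mem_iUnion.mp (hφ.symm ▸ mem_univ x : x ∈ ⋃ k, φ k)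
    have hki : k ≠ i := by
      rintro rfl
      exact hxφ (mem_biUnion hi hxk)
    exact mem_iUnion.mpr ⟨k, hxk, fun h => (hP hki).le_bot ⟨h, hxi⟩⟩

theorem MeasureTheory.measureReal_lt_card_mul_of_subset_iUnion {α ι : Type*}
    [MeasurableSpace α] {μ : Measure α} [IsFiniteMeasure μ] [Fintype ι] [Nonempty ι]
    {E : ι → Set α} {D : Set α} {δ : ℝ} (hD : D ⊆ ⋃ i, E i) (hE : ∀ i, μ.real (E i) < δ) :
    μ.real D < Fintype.card ι * δ :=
  calc μ.real D ≤ μ.real (⋃ i, E i) := measureReal_mono hD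
    _ ≤ ∑ i, μ.real (E i) := measureReal_iUnion_fintype_le E
    _ < ∑ _i : ι, δ := Finset.sum_lt_sum_of_nonempty Finset.univ_nonempty fun i _ => hE i
    _ = Fintype.card ι * δ := by simp

namespace Fin

variable {α : Type*} {n : ℕ} {ψ φ : Fin (n + 1) → Set α}

theorem eq_disjointed_update_last
    (hφ : ∀ i, i ≠ last n → φ i = ψ i \ ⋃ j ∈ {j | j < i}, ψ j)
    (hφlast : φ (last n) = univ \ ⋃ j ∈ {j | j ≠ last n}, ψ j) :
    φ = disjointed (update ψ (last n) univ) := by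
  funext i
  rw [disjointed_eq_inter_compl]
  rcases eq_or_ne i (last n) with rfl | hi
  · ext x
    simp +contextual [hφlast, lt_last_iff_ne_last]
  · have hψ : ∀ j < i, update ψ (last n) univ j = ψ j :=
      fun j hj => update_of_ne (hj.trans_le (le_last i)).ne _ _
    ext x
    simp +contextual [hφ i hi, hi, hψ]

theorem disjointed_update_last_diff_subset {P : Fin (n + 1) → Set α} (hP : ⋃ i, P i = univ)
    (k : Fin (n + 1)) :
    disjointed (update ψ (last n) univ) k \ P k ⊆ ⋃ j, symmDiff (P j) (ψ j) := by
  rintro x ⟨hxk, hxP⟩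
  rcases eq_or_ne k (last n) with rfl | hk
  · obtain ⟨j, hxj⟩ := mem_iUnion.mp (hP.symm ▸ mem_univ x : x ∈ ⋃ j, P j)
    have hj : j < last n := lt_last_iff_ne_last.mpr (by rintro rfl; exact hxP hxj)
    have hxψ := disjointed_subset_compl_of_lt _ hj hxk
    rw [update_of_ne hj.ne] at hxψ
    exact mem_iUnion.mpr ⟨j, mem_symmDiff.mpr (Or.inl ⟨hxj, hxψ⟩)⟩
  · have hxψ := disjointed_subset _ k hxk
    rw [update_of_ne hk] at hxψ
    exact mem_iUnion.mpr ⟨k, mem_symmDiff.mpr (Or.inr ⟨hxψ, hxP⟩)⟩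

end Fin

theorem stmt7_general {X : Type*} [MeasurableSpace X] (μ : Measure X) [IsProbabilityMeasure μ]
    (n : ℕ) (P : Fin (n + 1) → Set X)
    (hPdisj : Pairwise fun i j => Disjoint (P i) (P j))
    (hPcover : (⋃ i, P i) = Set.univ)
    (S : Set (Set X))
    (hSuniv : Set.univ ∈ S)
    (hScompl : ∀ s ∈ S, sᶜ ∈ S)
    (hSunion : ∀ s ∈ S, ∀ t ∈ S, s ∪ t ∈ S)
    (ε δ : ℝ) (hδ : 0 < δ)
    (hδε : 3 * ((n + 1 : ℕ) : ℝ) ^ 3 * δ < ε)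
    (ψ : Fin (n + 1) → Set X) (hψS : ∀ i, ψ i ∈ S)
    (hψclose : ∀ i, (μ (symmDiff (P i) (ψ i))).toReal < δ)
    (φ : Fin (n + 1) → Set X)
    (hφ : ∀ i : Fin (n + 1), i ≠ Fin.last n →
      φ i = ψ i \ ⋃ j ∈ {j : Fin (n + 1) | j < i}, ψ j)
    (hφlast : φ (Fin.last n) =
      Set.univ \ ⋃ j ∈ {j : Fin (n + 1) | j ≠ Fin.last n}, ψ j) :
    (∀ i, φ i ∈ S) ∧
    (Pairwise fun i j => Disjoint (φ i) (φ j)) ∧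
    ((⋃ i, φ i) = Set.univ) ∧
    (∀ I : Set (Fin (n + 1)),
      (μ (symmDiff (⋃ i ∈ I, φ i) (⋃ i ∈ I, P i))).toReal < ε) := by
  have hS : IsSetAlgebra S :=
    ⟨by simpa using hScompl _ hSuniv, hScompl, fun s t hs => hSunion s hs t⟩
  set f := update ψ (Fin.last n) univ
  have hφf : φ = disjointed f := Fin.eq_disjointed_update_last hφ hφlast
  have hfS : ∀ i, f i ∈ S :=
    (forall_update_iff ψ fun _ s => s ∈ S).2 ⟨hSuniv, fun i _ => hψS i⟩
  have hcover : ⋃ i, φ i = univ := by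
    rw [hφf, iUnion_disjointed]
    exact eq_univ_of_univ_subset (subset_iUnion_of_subset (Fin.last n) (by simp [f]))
  refine ⟨fun i => hφf ▸ hS.disjointed_mem hfS i, hφf ▸ disjoint_disjointed f, hcover,
    fun I => ?_⟩
  have hsub : symmDiff (⋃ i ∈ I, φ i) (⋃ i ∈ I, P i) ⊆ ⋃ j, symmDiff (P j) (ψ j) :=
    (Set.symmDiff_biUnion_subset_iUnion_diff hPdisj hcover I).trans
      (iUnion_subset fun k => hφf ▸ Fin.disjointed_update_last_diff_subset hPcover k)
  have hcube : ((n + 1 : ℕ) : ℝ) ≤ 3 * ((n + 1 : ℕ) : ℝ) ^ 3 := by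
    exact_mod_cast (Nat.le_self_pow (by norm_num) (n + 1)).trans
      (Nat.le_mul_of_pos_left _ (by norm_num))
  calc μ.real _ < Fintype.card (Fin (n + 1)) * δ :=
        measureReal_lt_card_mul_of_subset_iUnion hsub hψclose
    _ ≤ 3 * ((n + 1 : ℕ) : ℝ) ^ 3 * δ := by
        rw [Fintype.card_fin]
        gcongr
    _ < ε := hδε

theorem stmt7 {X : Type*} [MeasurableSpace X] (μ : Measure X) [IsProbabilityMeasure μ]
    (n : ℕ) (P : Fin (n + 1) → Set X)
    (hPmeas : ∀ i, MeasurableSet (P i))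
    (hPdisj : Pairwise fun i j => Disjoint (P i) (P j))
    (hPcover : (⋃ i, P i) = Set.univ)
    (S : Set (Set X))
    (hSmeas : ∀ s ∈ S, MeasurableSet s)
    (hSuniv : Set.univ ∈ S)
    (hScompl : ∀ s ∈ S, sᶜ ∈ S)
    (hSunion : ∀ s ∈ S, ∀ t ∈ S, s ∪ t ∈ S)
    (ε δ : ℝ) (hε : 0 < ε) (hδ : 0 < δ)
    (hδε : 3 * ((n + 1 : ℕ) : ℝ) ^ 3 * δ < ε)
    (ψ : Fin (n + 1) → Set X) (hψS : ∀ i, ψ i ∈ S)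
    (hψclose : ∀ i, (μ (symmDiff (P i) (ψ i))).toReal < δ)
    (φ : Fin (n + 1) → Set X)
    (hφ : ∀ i : Fin (n + 1), i ≠ Fin.last n →
      φ i = ψ i \ ⋃ j ∈ {j : Fin (n + 1) | j < i}, ψ j)
    (hφlast : φ (Fin.last n) =
      Set.univ \ ⋃ j ∈ {j : Fin (n + 1) | j ≠ Fin.last n}, ψ j) :
    (∀ i, φ i ∈ S) ∧
    (Pairwise fun i j => Disjoint (φ i) (φ j)) ∧
    ((⋃ i, φ i) = Set.univ) ∧
    (∀ I : Set (Fin (n + 1)),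
      (μ (symmDiff (⋃ i ∈ I, φ i) (⋃ i ∈ I, P i))).toReal < ε) :=
  stmt7_general μ n P hPdisj hPcover S hSuniv hScompl hSunion ε δ hδ hδε ψ hψS hψclose φ hφ hφlast
end

section
/- Let d ∈ ℕ, Δ⁰ := {(i,i) : 1 ≤ i ≤ d} the diagonal, and let P ⊆ {1,…,d}² be a partial bijection (both projections injective on P). If the composition P∘P as a relation satisfies |P Δ (P∘P)| ≤ δ·d, then |P Δ (P ∩ Δ⁰)| ≤ δ·d; that is, P \ (P ∩ Δ⁰) ⊆ P \ (P∘P). -/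
open Set

/-- Composition of relations on `Fin d`. -/
def pcomp {d : ℕ} (s t : Set (Fin d × Fin d)) : Set (Fin d × Fin d) :=
  {p | ∃ j : Fin d, (p.1, j) ∈ s ∧ (j, p.2) ∈ t}

theorem stmt11 (d : ℕ) (hd : 0 < d) (P : Set (Fin d × Fin d))
    (h₁ : Set.InjOn Prod.fst P) (h₂ : Set.InjOn Prod.snd P)
    (δ : ℝ)
    (hP : ((symmDiff P (pcomp P P)).ncard : ℝ) ≤ δ * d) :
    P \ (P ∩ {p : Fin d × Fin d | p.1 = p.2}) ⊆ P \ pcomp P P ∧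
    ((symmDiff P (P ∩ {p : Fin d × Fin d | p.1 = p.2})).ncard : ℝ) ≤ δ * d := by
  have hsub : P \ (P ∩ {p : Fin d × Fin d | p.1 = p.2}) ⊆ P \ pcomp P P := by
    rintro ⟨j, i⟩ ⟨hji, hnd⟩
    refine ⟨hji, ?_⟩
    rintro ⟨k, hjk, hki⟩
    have hik : i = k := congrArg Prod.snd (h₁ hji hjk rfl)
    subst hik
    have hj : j = i := congrArg Prod.fst (h₂ hji hki rfl)
    exact hnd ⟨hji, hj⟩
  refine ⟨hsub, ?_⟩
  have h1 : symmDiff P (P ∩ {p : Fin d × Fin d | p.1 = p.2}) = P \ (P ∩ {p : Fin d × Fin d | p.1 = p.2}) := by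
    rw [Set.symmDiff_def, Set.diff_eq_empty.mpr Set.inter_subset_left, Set.union_empty]
  have h2 : P \ pcomp P P ⊆ symmDiff P (pcomp P P) := by
    rw [Set.symmDiff_def]; exact Set.subset_union_left
  have hmono : (symmDiff P (P ∩ {p : Fin d × Fin d | p.1 = p.2})).ncard ≤ (symmDiff P (pcomp P P)).ncard := by
    apply Set.ncard_le_ncard (h1 ▸ hsub.trans h2) (Set.toFinite _)
  calc ((symmDiff P (P ∩ {p : Fin d × Fin d | p.1 = p.2})).ncard : ℝ) ≤ _ := Nat.cast_le.mpr hmono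
    _ ≤ δ * d := hP
end

section
/- Let (X, ρ) be a pseudo-metric space with finite diameter M, and consider the pseudo-metrics on X^d: ρ₂(x,y) = ((1/d)Σρ(xᵢ,yᵢ)²)^{1/2} and ρ_∞(x,y) = maxᵢ ρ(xᵢ,yᵢ). Suppose Y ⊆ X^d is (ρ₂, ε)-spanning for a set O ⊆ X^d, M ⊆ X is a (ρ, κ)-spanning finite set for X, and ε/κ < 1/10. Then there is a set Y' ⊆ X^d that is (ρ_∞, κ)-spanning for O with |Y'| ≤ |Y| · C(d, η) · |M|^η where η = ⌈ε²d/κ²⌉. In particular N'_κ(O, ρ_∞) ≤ N'_ε(O, ρ₂) · C(d, ⌈ε²κ⁻²d⌉) · |M|^{⌈ε²κ⁻²d⌉}. -/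
theorem stmt18 {X : Type*} (ρ : X → X → ℝ)
    (hρnn : ∀ a b, 0 ≤ ρ a b) (hρ0 : ∀ a, ρ a a = 0)
    (hρsymm : ∀ a b, ρ a b = ρ b a) (hρtri : ∀ a b c, ρ a c ≤ ρ a b + ρ b c)
    (Mbd : ℝ) (hbd : ∀ a b, ρ a b ≤ Mbd)
    (d : ℕ) (hd : 0 < d) (ε κ : ℝ) (hε : 0 < ε) (hκ : 0 < κ)
    (hratio : ε / κ < 1 / 10)
    (O Y : Set (Fin d → X)) (hYfin : Y.Finite)
    (hYspan : ∀ o ∈ O, ∃ y ∈ Y,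
      Real.sqrt ((1 / (d : ℝ)) * ∑ i, (ρ (o i) (y i)) ^ 2) < ε)
    (Mset : Set X) (hMfin : Mset.Finite)
    (hMspan : ∀ a : X, ∃ m ∈ Mset, ρ a m < κ) :
    ∃ Y' : Set (Fin d → X), Y'.Finite ∧
      (∀ o ∈ O, ∃ y ∈ Y', ∀ i, ρ (o i) (y i) < κ) ∧
      Y'.ncard ≤ Y.ncard * d.choose ⌈ε ^ 2 * d / κ ^ 2⌉₊ *
        Mset.ncard ^ ⌈ε ^ 2 * d / κ ^ 2⌉₊ := by
  classical
  set η := ⌈ε ^ 2 * d / κ ^ 2⌉₊ with hηdef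
  rcases O.eq_empty_or_nonempty with hO | ⟨o0, ho0⟩
  · exact ⟨∅, Set.finite_empty, by simp [hO], by simp⟩
  have x0 : X := o0 ⟨0, hd⟩
  -- η ≤ d
  have hεκ2 : ε ^ 2 / κ ^ 2 < 1 := by
    have h1 : (ε / κ) ^ 2 < (1 / 10 : ℝ) ^ 2 :=
      pow_lt_pow_left₀ hratio (by positivity) (by norm_num)
    rw [div_pow] at h1
    nlinarith
  have hηd : η ≤ d := by
    rw [hηdef, Nat.ceil_le]
    have : ε ^ 2 * d / κ ^ 2 = (ε ^ 2 / κ ^ 2) * d := by ring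
    rw [this]
    have hd' : (0:ℝ) < d := by exact_mod_cast hd
    nlinarith
  -- selection function into Mset
  have hsel : ∀ a : X, ∃ m, m ∈ Mset ∧ ρ a m < κ := by
    intro a; obtain ⟨m, hm1, hm2⟩ := hMspan a; exact ⟨m, hm1, hm2⟩
  set sel : X → X := fun a => (hsel a).choose with hseldef
  have hsel1 : ∀ a, sel a ∈ Mset := fun a => (hsel a).choose_spec.1
  have hsel2 : ∀ a, ρ a (sel a) < κ := fun a => (hsel a).choose_spec.2
  set YF := hYfin.toFinset with hYF
  set MF := hMfin.toFinset with hMF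
  set D : Finset ((_ : Finset (Fin d)) × (Fin d → X)) :=
    (Finset.univ.powersetCard η).sigma
      (fun S => Fintype.piFinset fun i => if i ∈ S then MF else {x0}) with hD
  set E := YF ×ˢ D with hE
  set G : (Fin d → X) × ((_ : Finset (Fin d)) × (Fin d → X)) → (Fin d → X) :=
    fun p => fun i => if i ∈ p.2.1 then p.2.2 i else p.1 i with hG
  refine ⟨↑(E.image G), Finset.finite_toSet _, ?_, ?_⟩
  · -- spanning
    intro o ho
    obtain ⟨y, hyY, hsqrt⟩ := hYspan o ho
    have hsum : ∑ i, (ρ (o i) (y i)) ^ 2 < ε ^ 2 * d := by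
      have h1 : (1 / (d : ℝ)) * ∑ i, (ρ (o i) (y i)) ^ 2 < ε ^ 2 :=
        (Real.sqrt_lt' hε).mp hsqrt
      have hd' : (0 : ℝ) < d := Nat.cast_pos.mpr hd
      calc ∑ i, (ρ (o i) (y i)) ^ 2
          = d * ((1 / (d : ℝ)) * ∑ i, (ρ (o i) (y i)) ^ 2) := by
            field_simp
        _ < d * ε ^ 2 := by exact (mul_lt_mul_iff_right₀ hd').mpr h1
        _ = ε ^ 2 * d := by ring
    set S₀ := Finset.univ.filter (fun i => κ ≤ ρ (o i) (y i)) with hS₀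
    have hcard0 : (S₀.card : ℝ) * κ ^ 2 ≤ ∑ i, (ρ (o i) (y i)) ^ 2 := by
      calc (S₀.card : ℝ) * κ ^ 2 = ∑ _i ∈ S₀, κ ^ 2 := by
            rw [Finset.sum_const, nsmul_eq_mul]
        _ ≤ ∑ i ∈ S₀, (ρ (o i) (y i)) ^ 2 := by
            apply Finset.sum_le_sum
            intro i hi
            have := (Finset.mem_filter.mp hi).2
            exact pow_le_pow_left₀ hκ.le this 2
        _ ≤ ∑ i, (ρ (o i) (y i)) ^ 2 := by
            apply Finset.sum_le_sum_of_subset_of_nonneg (Finset.subset_univ _)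
            intro i _ _; positivity
    have hcard1 : (S₀.card : ℝ) ≤ ε ^ 2 * d / κ ^ 2 := by
      rw [le_div_iff₀ (by positivity)]
      linarith
    have hcard2 : S₀.card ≤ η := by
      calc S₀.card = ⌈(S₀.card : ℝ)⌉₊ := (Nat.ceil_natCast _).symm
        _ ≤ η := Nat.ceil_le_ceil hcard1
    obtain ⟨S, hS₀S, _, hScard⟩ := Finset.exists_subsuperset_card_eq
      (Finset.subset_univ S₀) hcard2 (by simpa using hηd)
    set g : Fin d → X := fun i => if i ∈ S then sel (o i) else x0 with hg
    refine ⟨G (y, ⟨S, g⟩), ?_, ?_⟩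
    · apply Finset.mem_coe.mpr
      apply Finset.mem_image_of_mem
      rw [hE, Finset.mem_product]
      constructor
      · exact hYfin.mem_toFinset.mpr hyY
      · rw [hD, Finset.mem_sigma]
        constructor
        · exact Finset.mem_powersetCard.mpr ⟨Finset.subset_univ _, hScard⟩
        · rw [Fintype.mem_piFinset]
          intro i
          by_cases hi : i ∈ S
          · simp only [hg, hi, if_true]
            exact hMfin.mem_toFinset.mpr (hsel1 _)
          · simp [hg, hi]
    · intro i
      simp only [hG]
      by_cases hi : i ∈ S
      · simp only [hi, if_true, hg]
        exact hsel2 _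
      · simp only [hi, if_false]
        have : i ∉ S₀ := fun h => hi (hS₀S h)
        rw [hS₀, Finset.mem_filter] at this
        push_neg at this
        exact this (Finset.mem_univ i)
  · -- cardinality
    have hDcard : D.card = d.choose η * MF.card ^ η := by
      rw [hD, Finset.card_sigma]
      have h1 : ∀ S ∈ (Finset.univ : Finset (Fin d)).powersetCard η,
          (Fintype.piFinset fun i => if i ∈ S then MF else ({x0} : Finset X)).card
            = MF.card ^ η := by
        intro S hS
        obtain ⟨-, hScard⟩ := Finset.mem_powersetCard.mp hS
        rw [Fintype.card_piFinset]
        calc ∏ i, (if i ∈ S then MF else ({x0} : Finset X)).card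
            = ∏ i, (if i ∈ S then MF.card else 1) := by
              apply Finset.prod_congr rfl
              intro i _
              split <;> simp
          _ = ∏ i ∈ Finset.univ ∩ S, MF.card := by
              rw [Finset.prod_ite_mem]
          _ = MF.card ^ η := by
              rw [Finset.univ_inter, Finset.prod_const, hScard]
      rw [Finset.sum_congr rfl h1, Finset.sum_const, Finset.card_powersetCard,
        Finset.card_univ, Fintype.card_fin, smul_eq_mul]
    calc (↑(E.image G) : Set (Fin d → X)).ncard = (E.image G).card :=
          Set.ncard_coe_finset _
      _ ≤ E.card := Finset.card_image_le
      _ = YF.card * D.card := by rw [hE, Finset.card_product]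
      _ = Y.ncard * d.choose η * Mset.ncard ^ η := by
          rw [hDcard, Set.ncard_eq_toFinset_card Y hYfin, Set.ncard_eq_toFinset_card Mset hMfin]
          ring
end
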